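/- Let Ω be a finite set, E a proper nonempty subset of Ω, u: Ω → ℝ with u non-constant on Ω∖E, and β ∈ ℝ with β < u(ω) for all ω ∈ Ω. Define φ(A) = Σ_ω u(ω)A(ω) if A(E)=0 and φ(A) = β·e^{A(E)} if A(E)>0, and A ≼_φ B ⟺ φ(A) ≤ φ(B). Then ≼_φ is not convex: there exist α ∈ (0,1) and distributions A,B,C with αA+(1−α)C ≼_φ αB+(1−α)C but not A ≼_φ B. -/

import Mathlib

/-
Mixing any point mass outside `E` with a point mass inside `E` gives positive mass to `E`, so
`φ` of the mixture is `β · e^{1-α}` whatever the outside point was. Two point masses `δ_{ω₁}`,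
`δ_{ω₂}` outside `E` with `u ω₂ < u ω₁` thus become indifferent after mixing with `δ_e`, `e ∈ E`,
although `φ δ_{ω₁} = u ω₁ > u ω₂ = φ δ_{ω₂}`.
-/

open Finset

/-- `p` is a probability mass function on the finite type `X`. -/
def IsDist {X : Type*} [Fintype X] (p : X → ℝ) : Prop :=
  (∀ x, 0 ≤ p x) ∧ ∑ x, p x = 1

/-- Pointwise convex combination of two (distributions viewed as) functions. -/
def mix {X : Type*} (α : ℝ) (A B : X → ℝ) : X → ℝ :=
  fun x => α * A x + (1 - α) * B x

open Classical in
/-- The unacceptable-risk performance function. -/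
noncomputable def riskPhi {Ω : Type*} [Fintype Ω] (E : Finset Ω) (u : Ω → ℝ) (β : ℝ)
    (A : Ω → ℝ) : ℝ :=
  if (∑ ω ∈ E, A ω) = 0 then ∑ ω, u ω * A ω else β * Real.exp (∑ ω ∈ E, A ω)

section

variable {X : Type*}

theorem isDist_pi_single [Fintype X] [DecidableEq X] (a : X) : IsDist (Pi.single a 1 : X → ℝ) :=
  ⟨fun x => by by_cases h : x = a <;> simp [h], by simp⟩

theorem sum_mix (s : Finset X) (α : ℝ) (A B : X → ℝ) :
    ∑ x ∈ s, mix α A B x = α * ∑ x ∈ s, A x + (1 - α) * ∑ x ∈ s, B x := by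
  simp only [mix, sum_add_distrib, mul_sum]

end

section

variable {Ω : Type*} [Fintype Ω] (E : Finset Ω) (u : Ω → ℝ) (β : ℝ)

theorem riskPhi_of_sum_eq_zero {A : Ω → ℝ} (hA : ∑ ω ∈ E, A ω = 0) :
    riskPhi E u β A = ∑ ω, u ω * A ω := by
  rw [riskPhi, if_pos hA]

theorem riskPhi_of_sum_ne_zero {A : Ω → ℝ} (hA : ∑ ω ∈ E, A ω ≠ 0) :
    riskPhi E u β A = β * Real.exp (∑ ω ∈ E, A ω) := by
  rw [riskPhi, if_neg hA]

variable [DecidableEq Ω]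

theorem riskPhi_pi_single_of_notMem {a : Ω} (ha : a ∉ E) :
    riskPhi E u β (Pi.single a 1) = u a := by
  rw [riskPhi_of_sum_eq_zero E u β (by simp [Pi.single_apply, ha])]
  simp [Pi.single_apply]

theorem riskPhi_mix_pi_single_of_notMem_of_mem {α : ℝ} (hα : α ≠ 1) {a e : Ω}
    (ha : a ∉ E) (he : e ∈ E) :
    riskPhi E u β (mix α (Pi.single a 1) (Pi.single e 1)) = β * Real.exp (1 - α) := by
  have hmass : ∑ ω ∈ E, mix α (Pi.single a 1) (Pi.single e 1) ω = 1 - α := by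
    simp [sum_mix, Pi.single_apply, ha, he]
  rw [riskPhi_of_sum_ne_zero E u β (by rw [hmass]; exact sub_ne_zero.mpr hα.symm), hmass]

end

theorem riskPhi_not_convex {Ω : Type*} [Fintype Ω]
    (E : Finset Ω) (hE : E.Nonempty)
    (u : Ω → ℝ)
    (hu : ∃ ω₁ ∉ E, ∃ ω₂ ∉ E, u ω₁ ≠ u ω₂)
    (β : ℝ) :
    ∃ α : ℝ, 0 < α ∧ α < 1 ∧ ∃ A B C : Ω → ℝ, IsDist A ∧ IsDist B ∧ IsDist C ∧
      riskPhi E u β (mix α A C) ≤ riskPhi E u β (mix α B C) ∧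
      ¬ riskPhi E u β A ≤ riskPhi E u β B := by
  classical
  obtain ⟨e, he⟩ := hE
  obtain ⟨ω₁, hω₁, ω₂, hω₂, hlt⟩ : ∃ ω₁ ∉ E, ∃ ω₂ ∉ E, u ω₂ < u ω₁ := by
    obtain ⟨x, hx, y, hy, hxy⟩ := hu
    rcases hxy.lt_or_gt with h | h
    · exact ⟨y, hy, x, hx, h⟩
    · exact ⟨x, hx, y, hy, h⟩
  have hα : (1 / 2 : ℝ) ≠ 1 := by norm_num
  refine ⟨1 / 2, by norm_num, by norm_num, Pi.single ω₁ 1, Pi.single ω₂ 1, Pi.single e 1,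
    isDist_pi_single ω₁, isDist_pi_single ω₂, isDist_pi_single e, ?_, ?_⟩
  · rw [riskPhi_mix_pi_single_of_notMem_of_mem E u β hα hω₁ he,
      riskPhi_mix_pi_single_of_notMem_of_mem E u β hα hω₂ he]
  · rw [riskPhi_pi_single_of_notMem E u β hω₁, riskPhi_pi_single_of_notMem E u β hω₂]
    exact not_le.mpr hlt
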